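/- Let L(f,0) be an nℤ-periodic algebra with structure matrix (α_{ij}) and let s ∈ {1,…,n−1} with gcd(s,n) = 1. If (α_{is}, α_{si}) ≠ (0,0) for all i = 0,…,n−1, then the subalgebra generated by {e_{nk+s} : k ∈ ℤ} is all of L(f,0). -/

import Mathlib

/-!
Left or right multiplication by the generator `e_s` sends `e_m` to a nonzero multiple of
`e_{m+s}`, because `(α_{ms}, α_{sm}) ≠ (0,0)`. Starting from the generators, which fill the
class `s + nℤ`, every class `js + nℤ` with `j ≥ 1` is therefore reached, and these are all
classes since `s` is a unit modulo `n`.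
-/

open Finsupp

/-- Multiplication of an `nℤ`-periodic algebra with structure matrix `α`. -/
noncomputable def mulN {K : Type*} [Field K] (n : ℕ) (α : ZMod n → ZMod n → K)
    (x y : ℤ →₀ K) : ℤ →₀ K :=
  x.sum fun a xa => y.sum fun b yb =>
    Finsupp.single (a + b) (xa * yb * α (a : ZMod n) (b : ZMod n))

lemma Submodule.single_one_mem_of_single_mem {K ι : Type*} [DivisionRing K]
    {p : Submodule K (ι →₀ K)} {m : ι} {c : K}
    (hc : c ≠ 0) (h : single m c ∈ p) : single m (1 : K) ∈ p := by
  simpa [smul_single, hc] using p.smul_mem c⁻¹ h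

lemma Submodule.eq_top_of_forall_single_one_mem {R ι : Type*} [Semiring R]
    {p : Submodule R (ι →₀ R)}
    (h : ∀ m : ι, single m (1 : R) ∈ p) : p = ⊤ :=
  eq_top_iff.2 <| (Finsupp.basisSingleOne (R := R) (ι := ι)).span_eq.ge.trans <|
    Submodule.span_le.2 <| Set.range_subset_iff.2 h

section

variable {K : Type*} [Field K] {n : ℕ} {α : ZMod n → ZMod n → K}

lemma mulN_single (a b : ℤ) (c d : K) :
    mulN n α (single a c) (single b d) = single (a + b) (c * d * α a b) := by
  unfold mulN
  rw [sum_single_index, sum_single_index] <;> simp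

variable {p : Submodule K (ℤ →₀ K)}
  (hp : ∀ x y, x ∈ p → y ∈ p → mulN n α x y ∈ p)
include hp

lemma single_add_mem_of_mulN_closed {a b : ℤ} (ha : single a (1 : K) ∈ p)
    (hb : single b (1 : K) ∈ p) (hab : ¬ (α a b = 0 ∧ α b a = 0)) :
    single (a + b) (1 : K) ∈ p := by
  rcases not_and_or.1 hab with hab | hba
  · refine Submodule.single_one_mem_of_single_mem hab ?_
    simpa [mulN_single] using hp _ _ ha hb
  · refine Submodule.single_one_mem_of_single_mem hba ?_
    simpa [mulN_single, add_comm] using hp _ _ hb ha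

lemma single_mem_of_intCast_eq_succ_mul {s : ℤ}
    (hgen : ∀ k : ℤ, single ((n : ℤ) * k + s) (1 : K) ∈ p)
    (hα : ∀ i : ZMod n, ¬ (α i s = 0 ∧ α s i = 0)) (j : ℕ) :
    ∀ m : ℤ, (m : ZMod n) = (j + 1) * s → single m (1 : K) ∈ p := by
  induction j with
  | zero =>
    intro m hm
    obtain ⟨k, hk⟩ := (ZMod.intCast_eq_intCast_iff_dvd_sub s m n).1 (by simpa using hm.symm)
    simpa [show m = n * k + s by omega] using hgen k
  | succ j ih =>
    intro m hm
    have hms : single (m - s) (1 : K) ∈ p := ih _ (by push_cast [hm]; ring)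
    simpa using single_add_mem_of_mulN_closed hp hms (by simpa using hgen 0) (hα _)

end

lemma ZMod.exists_intCast_eq_succ_mul {n : ℕ} [NeZero n] {s : ℤ} (hs : IsCoprime s n)
    (m : ℤ) :
    ∃ j : ℕ, (m : ZMod n) = (j + 1) * s := by
  have hunit : IsUnit (s : ZMod n) := by
    simpa using isCoprime_zero_right.1 (by simpa using hs.map (Int.castRingHom (ZMod n)))
  refine ⟨(m * hunit.unit⁻¹ - 1 : ZMod n).val, ?_⟩
  simp [mul_assoc]

theorem stmt17_general {K : Type*} [Field K] (n : ℕ) (hn : 0 < n) (α : ZMod n → ZMod n → K)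
    (s : ℤ) (hcop : IsCoprime s (n : ℤ))
    (hb : ∀ i : ZMod n, ¬ (α i (s : ZMod n) = 0 ∧ α (s : ZMod n) i = 0)) :
    ∀ p : Submodule K (ℤ →₀ K),
      (∀ k : ℤ, Finsupp.single ((n : ℤ) * k + s) (1 : K) ∈ p) →
      (∀ x y : ℤ →₀ K, x ∈ p → y ∈ p → mulN n α x y ∈ p) →
      p = ⊤ := by
  intro p hgen hp
  have : NeZero n := ⟨hn.ne'⟩
  refine Submodule.eq_top_of_forall_single_one_mem fun m => ?_
  obtain ⟨j, hj⟩ := ZMod.exists_intCast_eq_succ_mul hcop m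
  exact single_mem_of_intCast_eq_succ_mul hp hgen hb j m hj

/-- if `s ≢ 0 (mod n)`, `gcd(s,n) = 1` and `(α_{is}, α_{si}) ≠ (0,0)` for
all `i`, then the subalgebra generated by `{e_{nk+s} : k ∈ ℤ}` is all of `L(f,0)`,
i.e. every subspace containing these elements and closed under multiplication is
everything. -/
theorem stmt17 {K : Type*} [Field K] (n : ℕ) (hn : 0 < n) (α : ZMod n → ZMod n → K)
    (s : ℤ) (hs0 : ¬ ((n : ℤ) ∣ s)) (hcop : IsCoprime s (n : ℤ))
    (hb : ∀ i : ZMod n, ¬ (α i (s : ZMod n) = 0 ∧ α (s : ZMod n) i = 0)) :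
    ∀ p : Submodule K (ℤ →₀ K),
      (∀ k : ℤ, Finsupp.single ((n : ℤ) * k + s) (1 : K) ∈ p) →
      (∀ x y : ℤ →₀ K, x ∈ p → y ∈ p → mulN n α x y ∈ p) →
      p = ⊤ :=
  stmt17_general n hn α s hcop hb
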